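/- arXiv:1806.09537 — 3 statements merged into one kernel-verified Lean document; each statement's English description precedes it below -/
import Mathlib

section
/- Let x_1,…,x_n ∈ ℝ^d, let P_1,…,P_{p+1} ∈ ℝ^d and ρ_1,…,ρ_p ≥ 0, and let ν = Σ_α ρ_α (l^α)_# λ_{[0,1]} with l^α(t) = (1−t)P_α + t P_{α+1}. Assume hypothesis (H): ⟨P_{α+1} − P_α, x_i − x_j⟩ ≠ 0 for every α ∈ {1,…,p} and every pair i ≠ j. Then for every weight vector φ ∈ ℝ^n and every pair i ≠ j, the measure of the intersection of Laguerre cells vanishes: ν(Lag_i(φ) ∩ Lag_j(φ)) = 0. -/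
open scoped RealInnerProductSpace
open MeasureTheory

/-- The `i`-th Laguerre cell for sites `x` and weights `φ`. -/
def Lag {d n : ℕ} (x : Fin n → EuclideanSpace ℝ (Fin d)) (φ : Fin n → ℝ) (i : Fin n) :
    Set (EuclideanSpace ℝ (Fin d)) :=
  {y | ∀ j, ‖y - x i‖ ^ 2 - φ i ≤ ‖y - x j‖ ^ 2 - φ j}

/-- The polyline measure `ν = Σ_α ρ_α (l^α)_# λ_{[0,1]}`. -/
noncomputable def polylineMeasure {d p : ℕ} (P : Fin (p + 1) → EuclideanSpace ℝ (Fin d))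
    (ρ : Fin p → ℝ) : Measure (EuclideanSpace ℝ (Fin d)) :=
  ∑ α : Fin p, ENNReal.ofReal (ρ α) •
    Measure.map (fun t : ℝ => (1 - t) • P α.castSucc + t • P α.succ)
      (volume.restrict (Set.Icc (0 : ℝ) 1))

theorem polyline_measure_of_cell_intersection_eq_zero {d n p : ℕ}
    (x : Fin n → EuclideanSpace ℝ (Fin d))
    (P : Fin (p + 1) → EuclideanSpace ℝ (Fin d)) (ρ : Fin p → ℝ)
    (hρ : ∀ α, 0 ≤ ρ α)
    (hH : ∀ (α : Fin p) (i j : Fin n), i ≠ j →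
      ⟪P α.succ - P α.castSucc, x i - x j⟫ ≠ 0)
    (φ : Fin n → ℝ) (i j : Fin n) (hij : i ≠ j) :
    polylineMeasure P ρ (Lag x φ i ∩ Lag x φ j) = 0 := by
  classical
  have hmeasLag : ∀ k : Fin n, MeasurableSet (Lag x φ k) := by
    intro k
    have hcl : IsClosed (Lag x φ k) := by
      have heq : Lag x φ k =
          ⋂ m, {y : EuclideanSpace ℝ (Fin d) | ‖y - x k‖ ^ 2 - φ k ≤ ‖y - x m‖ ^ 2 - φ m} := by
        ext y; simp [Lag, Set.mem_iInter]
      rw [heq]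
      exact isClosed_iInter fun m => isClosed_le (by fun_prop) (by fun_prop)
    exact hcl.measurableSet
  have hmeas : MeasurableSet (Lag x φ i ∩ Lag x φ j) := (hmeasLag i).inter (hmeasLag j)
  rw [polylineMeasure, Measure.finset_sum_apply]
  apply Finset.sum_eq_zero
  intro α _
  rw [Measure.smul_apply, Measure.map_apply (by fun_prop) hmeas]
  set u := P α.succ - P α.castSucc with hu
  set a := P α.castSucc - x i with ha
  set b := P α.castSucc - x j with hb
  have hcne : ⟪u, x i - x j⟫ ≠ 0 := hH α i j hij
  set c : ℝ := 2 * ⟪u, b - a⟫ with hcdef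
  have hba : b - a = x i - x j := by rw [ha, hb]; abel
  have hc0 : c ≠ 0 := by
    rw [hcdef, hba]; exact mul_ne_zero two_ne_zero hcne
  set K : ℝ := ‖a‖ ^ 2 - ‖b‖ ^ 2 + φ j - φ i with hK
  have hsub : (fun t : ℝ => (1 - t) • P α.castSucc + t • P α.succ) ⁻¹'
      (Lag x φ i ∩ Lag x φ j) ⊆ {K / c} := by
    intro t ht
    have h1 := ht.1 j
    have h2 := ht.2 i
    have heq : ‖((1 - t) • P α.castSucc + t • P α.succ) - x i‖ ^ 2 - φ i
        = ‖((1 - t) • P α.castSucc + t • P α.succ) - x j‖ ^ 2 - φ j := le_antisymm h1 h2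
    have hli : (1 - t) • P α.castSucc + t • P α.succ - x i = a + t • u := by
      rw [ha, hu]; module
    have hlj : (1 - t) • P α.castSucc + t • P α.succ - x j = b + t • u := by
      rw [hb, hu]; module
    rw [hli, hlj] at heq
    have hexp : ∀ v : EuclideanSpace ℝ (Fin d),
        ‖v + t • u‖ ^ 2 = ‖v‖ ^ 2 + 2 * t * ⟪u, v⟫ + t ^ 2 * ‖u‖ ^ 2 := by
      intro v
      rw [norm_add_sq_real, real_inner_smul_right, norm_smul, real_inner_comm]
      simp only [Real.norm_eq_abs, mul_pow, sq_abs]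
      ring
    rw [hexp a, hexp b] at heq
    have hinner : ⟪u, b - a⟫ = ⟪u, b⟫ - ⟪u, a⟫ := inner_sub_right u b a
    have hct : c * t = K := by
      rw [hcdef, hK, hinner]; nlinarith [heq]
    have ht0 : t = K / c := by field_simp; linarith [hct]
    simp [ht0]
  have h0 : (volume.restrict (Set.Icc (0 : ℝ) 1)) {K / c} = 0 := by
    rw [Measure.restrict_apply (measurableSet_singleton _)]
    exact measure_mono_null Set.inter_subset_left (by simp)
  rw [measure_mono_null hsub h0]
  simp
end

section
/- Let x_1,…,x_n ∈ ℝ^d be distinct points, m ∈ ℝ^n, let P_1,…,P_{p+1} ∈ ℝ^d and ρ_1,…,ρ_p ≥ 0, and let ν = Σ_α ρ_α (l^α)_# λ_{[0,1]} with l^α(t) = (1−t)P_α + t P_{α+1}. Assume hypothesis (H): ⟨P_{α+1} − P_α, x_i − x_j⟩ ≠ 0 for every α and every pair i ≠ j. Then the dual functional g(φ) = ∫ min_{1≤i≤n} (‖x − x_i‖² − φ_i) dν(x) + Σ_{i=1}^n m_i φ_i is differentiable at every φ ∈ ℝ^n, with gradient given coordinatewise by ∂g/∂φ_i (φ) = m_i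 − ν(Lag_i(φ)). -/
/-!
For fixed `y`, the integrand `ψ ↦ minᵢ (‖y - xᵢ‖² - ψᵢ)` is 1-Lipschitz in the sup norm, and
wherever the minimum is attained at a single index `i` it agrees near `φ` with `‖y - xᵢ‖² - ψᵢ`,
so its derivative there is `-eᵢ`. A tie between `i ≠ j` happens on a hyperplane orthogonal to
`xᵢ - xⱼ`, which hypothesis (H) forces each segment of the polyline to cross at most once; hence
ties are `ν`-null and differentiation under the integral sign (dominated by the constant 1)
gives the derivative `-∑ᵢ ν(Lagᵢ(φ)) eᵢ` of the integral term.
-/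

open scoped RealInnerProductSpace
open MeasureTheory

open Set Filter Topology

section MinOfWeightedCosts

variable {ι : Type*} [Fintype ι]

theorem lipschitzWith_one_iInf_sub (a : ι → ℝ) :
    LipschitzWith 1 fun ψ : ι → ℝ => ⨅ i, (a i - ψ i) := by
  refine LipschitzWith.of_le_add fun ψ χ => ?_
  rcases isEmpty_or_nonempty ι with hι | hι
  · simp [Real.iInf_of_isEmpty, dist_nonneg]
  rw [← sub_le_iff_le_add]
  refine le_ciInf fun i => ?_
  have hi : |ψ i - χ i| ≤ dist ψ χ := by
    simpa only [Real.dist_eq] using dist_le_pi_dist ψ χ i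
  have hmin : ⨅ j, (a j - ψ j) ≤ a i - ψ i := ciInf_le (Finite.bddBelow_range _) i
  linarith [neg_abs_le (ψ i - χ i)]

theorem hasFDerivAt_iInf_sub_of_lt {a φ : ι → ℝ} {i : ι}
    (hi : ∀ j ≠ i, a i - φ i < a j - φ j) :
    HasFDerivAt (fun ψ : ι → ℝ => ⨅ j, (a j - ψ j))
      (-ContinuousLinearMap.proj (R := ℝ) (φ := fun _ : ι => ℝ) i) φ := by
  have : Nonempty ι := ⟨i⟩
  have hnear : ∀ᶠ ψ in 𝓝 φ, ∀ j, a i - ψ i ≤ a j - ψ j := by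
    refine eventually_all.2 fun j => ?_
    by_cases hji : j = i
    · exact .of_forall fun ψ => by rw [hji]
    · have hcont : ∀ k, Continuous fun ψ : ι → ℝ => a k - ψ k := fun k => by fun_prop
      exact ((hcont i).continuousAt.eventually_lt (hcont j).continuousAt (hi j hji)).mono
        fun _ h => h.le
  have hmin : (fun ψ : ι → ℝ => ⨅ j, (a j - ψ j)) =ᶠ[𝓝 φ] fun ψ => a i - ψ i :=
    hnear.mono fun ψ hψ =>
      le_antisymm (ciInf_le (Finite.bddBelow_range _) i) (le_ciInf hψ)
  exact ((hasFDerivAt_apply i φ).const_sub (a i)).congr_of_eventuallyEq hmin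

def laguerreCell {X : Type*} (c : ι → X → ℝ) (φ : ι → ℝ) (i : ι) : Set X :=
  {y | ∀ j, c i y - φ i ≤ c j y - φ j}

theorem hasFDerivAt_integral_iInf_sub {X : Type*} [MeasurableSpace X] {μ : Measure X}
    [IsFiniteMeasure μ]
    {c : ι → X → ℝ} (hc : ∀ i, Measurable (c i)) {φ : ι → ℝ}
    (hint : Integrable (fun y => ⨅ i, (c i y - φ i)) μ)
    (hties : ∀ᵐ y ∂μ, Function.Injective fun i => c i y - φ i) :
    HasFDerivAt (fun ψ : ι → ℝ => ∫ y, ⨅ i, (c i y - ψ i) ∂μ)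
      (-∑ i, μ.real (laguerreCell c φ i) •
        ContinuousLinearMap.proj (R := ℝ) (φ := fun _ : ι => ℝ) i) φ := by
  set e : ι → (ι → ℝ) →L[ℝ] ℝ := fun i => ContinuousLinearMap.proj i
  have hcell : ∀ i, MeasurableSet (laguerreCell c φ i) := fun i => by
    simp only [laguerreCell, ofPred_forall]
    exact .iInter fun j => measurableSet_le ((hc i).sub_const _) ((hc j).sub_const _)
  -- the derivative of the integrand at every `y` where the minimizing index is unique
  set F' : X → (ι → ℝ) →L[ℝ] ℝ :=
    fun y => -∑ i, (laguerreCell c φ i).indicator (fun _ => e i) y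
  have hF'meas : AEStronglyMeasurable F' μ :=
    (Finset.stronglyMeasurable_fun_sum _ fun i _ =>
      stronglyMeasurable_const.indicator (hcell i)).neg.aestronglyMeasurable
  have hF'int : ∫ y, F' y ∂μ = -∑ i, μ.real (laguerreCell c φ i) • e i := by
    rw [integral_neg, integral_finsetSum _ fun i _ => (integrable_const (e i)).indicator (hcell i)]
    exact congrArg Neg.neg (Finset.sum_congr rfl fun i _ => integral_indicator_const _ (hcell i))
  have hdiff : ∀ᵐ y ∂μ, HasFDerivAt (fun ψ : ι → ℝ => ⨅ i, (c i y - ψ i)) (F' y) φ := by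
    filter_upwards [hties] with y hy
    rcases isEmpty_or_nonempty ι with hι | hι
    · simpa [F', Real.iInf_of_isEmpty] using hasFDerivAt_const (0 : ℝ) φ
    obtain ⟨i, hi⟩ := Finite.exists_min fun j => c j y - φ j
    have hlt : ∀ j ≠ i, c i y - φ i < c j y - φ j := fun j hj =>
      (hi j).lt_of_ne fun h => hj (hy h).symm
    have hF'y : F' y = -e i := by
      rw [neg_inj, Finset.sum_eq_single i
        (fun j _ hj => indicator_of_notMem
          (fun (hjy : y ∈ laguerreCell c φ j) => (hlt j hj).not_ge (hjy i)) _)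
        (fun h => (h (Finset.mem_univ i)).elim)]
      exact indicator_of_mem (s := laguerreCell c φ i) hi _
    rw [hF'y]
    exact hasFDerivAt_iInf_sub_of_lt hlt
  have hmeas : ∀ ψ : ι → ℝ, AEStronglyMeasurable (fun y => ⨅ i, (c i y - ψ i)) μ := fun ψ =>
    (Measurable.iInf fun i => (hc i).sub_const _).aestronglyMeasurable
  rw [← hF'int]
  refine (hasFDerivAt_integral_of_dominated_loc_of_lip (bound := fun _ => 1) univ_mem
    (.of_forall hmeas) hint hF'meas (.of_forall fun y => ?_) (integrable_const _) hdiff).2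
  simpa using (lipschitzWith_one_iInf_sub fun i => c i y).lipschitzOnWith (s := univ)

end MinOfWeightedCosts

theorem continuous_iInf_of_fintype {ι X α : Type*} [Fintype ι] [TopologicalSpace X]
    [ConditionallyCompleteLinearOrder α] [TopologicalSpace α] [OrderClosedTopology α]
    {f : ι → X → α} (hf : ∀ i, Continuous (f i)) : Continuous fun y => ⨅ i, f i y := by
  rcases isEmpty_or_nonempty ι with hι | hι
  · simp only [iInf_of_isEmpty]
    exact continuous_const
  simp only [← Finset.inf'_univ_eq_ciInf]
  exact Continuous.finset_inf'_apply Finset.univ_nonempty fun i _ => hf i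

section Bisector

variable {E : Type*} [NormedAddCommGroup E] [InnerProductSpace ℝ E]

theorem inner_sub_eq_zero_of_norm_sq_sub_eq {y z u v : E}
    (h : ‖y - u‖ ^ 2 - ‖y - v‖ ^ 2 = ‖z - u‖ ^ 2 - ‖z - v‖ ^ 2) : ⟪y - z, u - v⟫ = 0 := by
  rw [norm_sub_sq_real, norm_sub_sq_real, norm_sub_sq_real, norm_sub_sq_real] at h
  rw [inner_sub_left, inner_sub_right, inner_sub_right]
  linarith

theorem subsingleton_setOf_segment_norm_sq_sub_eq {a b u v : E} (hab : ⟪b - a, u - v⟫ ≠ 0)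
    (w w' : ℝ) :
    {t : ℝ | ‖(1 - t) • a + t • b - u‖ ^ 2 - w =
      ‖(1 - t) • a + t • b - v‖ ^ 2 - w'}.Subsingleton := by
  intro t ht s hs
  have hdiff : ((1 - t) • a + t • b) - ((1 - s) • a + s • b) = (t - s) • (b - a) := by
    simp only [sub_smul, smul_sub, one_smul]
    abel
  simp only [mem_ofPred_eq] at ht hs
  have horth := inner_sub_eq_zero_of_norm_sq_sub_eq (u := u) (v := v)
    (y := (1 - t) • a + t • b) (z := (1 - s) • a + s • b) (by linarith)
  rw [hdiff, real_inner_smul_left, mul_eq_zero, sub_eq_zero] at horth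
  exact horth.resolve_right hab

end Bisector

section Polyline

variable {d p : ℕ} (P : Fin (p + 1) → EuclideanSpace ℝ (Fin d)) (ρ : Fin p → ℝ)

instance isFiniteMeasure_polylineMeasure : IsFiniteMeasure (polylineMeasure P ρ) := by
  refine ⟨(Measure.finsetSum_apply _ _ _).trans_lt (ENNReal.sum_lt_top.2 fun α _ => ?_)⟩
  exact ENNReal.mul_lt_top ENNReal.ofReal_lt_top (measure_lt_top _ _)

theorem integrable_polylineMeasure_of_continuous {F : Type*} [NormedAddCommGroup F]
    {f : EuclideanSpace ℝ (Fin d) → F} (hf : Continuous f) :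
    Integrable f (polylineMeasure P ρ) := by
  refine integrable_finsetSum_measure.2 fun α _ =>
    Integrable.smul_measure ?_ ENNReal.ofReal_ne_top
  have hseg : Continuous fun t : ℝ => (1 - t) • P α.castSucc + t • P α.succ := by fun_prop
  rw [integrable_map_measure hf.aestronglyMeasurable hseg.aemeasurable]
  exact (hf.comp hseg).integrableOn_Icc

theorem polylineMeasure_eq_zero_of_subsingleton_preimage {s : Set (EuclideanSpace ℝ (Fin d))}
    (hs : MeasurableSet s)
    (hseg : ∀ α : Fin p,
      ((fun t : ℝ => (1 - t) • P α.castSucc + t • P α.succ) ⁻¹' s).Subsingleton) :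
    polylineMeasure P ρ s = 0 := by
  refine (Measure.finsetSum_apply _ _ _).trans (Finset.sum_eq_zero fun α _ => ?_)
  rw [Measure.smul_apply, Measure.map_apply (by fun_prop) hs, (hseg α).measure_zero, smul_zero]

theorem ae_injective_norm_sq_sub_polylineMeasure {ι : Type*} [Countable ι]
    {x : ι → EuclideanSpace ℝ (Fin d)}
    (hH : ∀ (α : Fin p) (i j : ι), i ≠ j → ⟪P α.succ - P α.castSucc, x i - x j⟫ ≠ 0)
    (φ : ι → ℝ) :
    ∀ᵐ y ∂polylineMeasure P ρ, Function.Injective fun i => ‖y - x i‖ ^ 2 - φ i := by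
  have hcost : ∀ i, Measurable fun y : EuclideanSpace ℝ (Fin d) => ‖y - x i‖ ^ 2 - φ i :=
    fun i => by fun_prop
  have htie : ∀ i j, ∀ᵐ y ∂polylineMeasure P ρ,
      ‖y - x i‖ ^ 2 - φ i = ‖y - x j‖ ^ 2 - φ j → i = j := by
    intro i j
    by_cases hij : i = j
    · exact .of_forall fun _ _ => hij
    have hnull := polylineMeasure_eq_zero_of_subsingleton_preimage P ρ
      (measurableSet_eq_fun (hcost i) (hcost j))
      fun α => subsingleton_setOf_segment_norm_sq_sub_eq (hH α i j hij) (φ i) (φ j)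
    filter_upwards [measure_eq_zero_iff_ae_notMem.1 hnull] with y hy h using (hy h).elim
  filter_upwards [ae_all_iff.2 fun i => ae_all_iff.2 (htie i)] with y hy i j using hy i j

end Polyline

theorem dual_functional_differentiable_with_gradient_general {d n p : ℕ}
    (x : Fin n → EuclideanSpace ℝ (Fin d))
    (m : Fin n → ℝ)
    (P : Fin (p + 1) → EuclideanSpace ℝ (Fin d)) (ρ : Fin p → ℝ)
    (hH : ∀ (α : Fin p) (i j : Fin n), i ≠ j →
      ⟪P α.succ - P α.castSucc, x i - x j⟫ ≠ 0)
    (φ : Fin n → ℝ) :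
    HasFDerivAt
      (fun ψ : Fin n → ℝ =>
        (∫ y, (⨅ i, (‖y - x i‖ ^ 2 - ψ i)) ∂(polylineMeasure P ρ)) + ∑ i, m i * ψ i)
      (∑ i : Fin n, (m i - (polylineMeasure P ρ (Lag x φ i)).toReal) •
        (ContinuousLinearMap.proj i : (Fin n → ℝ) →L[ℝ] ℝ))
      φ := by
  have hcost : ∀ i, Continuous fun y : EuclideanSpace ℝ (Fin d) => ‖y - x i‖ ^ 2 :=
    fun i => by fun_prop
  have hmin := hasFDerivAt_integral_iInf_sub (φ := φ) (fun i => (hcost i).measurable)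
    (integrable_polylineMeasure_of_continuous P ρ
      (continuous_iInf_of_fintype fun i => (hcost i).sub continuous_const))
    (ae_injective_norm_sq_sub_polylineMeasure P ρ hH φ)
  have hcell : laguerreCell (fun i y => ‖y - x i‖ ^ 2) φ = Lag x φ := rfl
  rw [hcell] at hmin
  have hlin : HasFDerivAt (fun ψ : Fin n → ℝ => ∑ i, m i * ψ i)
      (∑ i, m i • (ContinuousLinearMap.proj i : (Fin n → ℝ) →L[ℝ] ℝ)) φ :=
    .fun_sum fun i _ => (hasFDerivAt_apply i φ).const_mul (m i)
  refine (hmin.add hlin).congr_fderiv ?_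
  rw [← Finset.sum_neg_distrib, ← Finset.sum_add_distrib]
  refine Finset.sum_congr rfl fun i _ => ContinuousLinearMap.ext fun ψ => ?_
  simp only [add_apply, neg_apply, smul_apply, ContinuousLinearMap.proj_apply, smul_eq_mul,
    measureReal_def]
  ring

theorem dual_functional_differentiable_with_gradient {d n p : ℕ}
    (x : Fin n → EuclideanSpace ℝ (Fin d)) (hx : Function.Injective x)
    (m : Fin n → ℝ)
    (P : Fin (p + 1) → EuclideanSpace ℝ (Fin d)) (ρ : Fin p → ℝ)
    (hρ : ∀ α, 0 ≤ ρ α)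
    (hH : ∀ (α : Fin p) (i j : Fin n), i ≠ j →
      ⟪P α.succ - P α.castSucc, x i - x j⟫ ≠ 0)
    (φ : Fin n → ℝ) :
    HasFDerivAt
      (fun ψ : Fin n → ℝ =>
        (∫ y, (⨅ i, (‖y - x i‖ ^ 2 - ψ i)) ∂(polylineMeasure P ρ)) + ∑ i, m i * ψ i)
      (∑ i : Fin n, (m i - (polylineMeasure P ρ (Lag x φ i)).toReal) •
        (ContinuousLinearMap.proj i : (Fin n → ℝ) →L[ℝ] ℝ))
      φ :=
  dual_functional_differentiable_with_gradient_general x m P ρ hH φ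
end

section
/- Let x_1, x_2 ∈ ℝ^d with x_1 ≠ x_2, and let ν = Σ_{α=1}^p ρ_α (l^α)_# λ_{[0,1]} be a polyline measure with l^α(t) = (1−t)P_α + t P_{α+1} and ρ_α ≥ 0, satisfying ⟨P_{α+1} − P_α, x_1 − x_2⟩ ≠ 0 for every α. Fix φ = (φ_1, φ_2) ∈ ℝ², and for each α let t_α be the unique solution of ‖l^α(t) − x_1‖² − φ_1 = ‖l^α(t) − x_2‖² − φ_2; assume t_α ∉ {0, 1} for every α with ρ_α > 0. Then the function ε ↦ ν(Lag_1((φ_1 + ε, φ_2))) is differentiable at ε = 0 with derivative Σ_{α : ρ_α > 0, t_α ∈ (0,1)} ρ_α / (2 |⟨P_{α+1} − P_α, x_1 − x_2⟩|). -/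
/-!
Along the segment `l^α`, the cost difference `‖y - x1‖² - ‖y - x2‖²` is affine in the
parameter, with slope `-2⟪P_{α+1} - P_α, x1 - x2⟫ =: -c_α`, and it equals `φ1 - φ2` at `t_α`.
So `l^α` meets the cell for the weights `(φ1 + ε, φ2)` in the half-line bounded by
`t_α - ε / c_α`, and the mass of that segment is `ρ_α` times the length of the half-line clamped to
`[0, 1]`. Since `t_α ∉ {0, 1}`, this length is locally constant or affine near `ε = 0`, with slope
`1 / |c_α|` exactly when `t_α ∈ (0, 1)`.
-/

open scoped RealInnerProductSpace
open MeasureTheory Set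

lemma volume_Icc_inter_Iic_toReal (s : ℝ) :
    (volume (Icc (0 : ℝ) 1 ∩ Iic s)).toReal = max 0 (min 1 s) := by
  have : Icc (0 : ℝ) 1 ∩ Iic s = Icc 0 (min 1 s) := by
    ext x; simp only [mem_inter_iff, mem_Icc, mem_Iic, le_min_iff]; tauto
  rw [this, Real.volume_Icc, ENNReal.toReal_ofReal', sub_zero, max_comm]

lemma volume_Icc_inter_Ici_toReal (s : ℝ) :
    (volume (Icc (0 : ℝ) 1 ∩ Ici s)).toReal = 1 - max 0 (min 1 s) := by
  have : Icc (0 : ℝ) 1 ∩ Ici s = Icc (max 0 s) 1 := by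
    ext x; simp only [mem_inter_iff, mem_Icc, mem_Ici, max_le_iff]; tauto
  rw [this, Real.volume_Icc, ENNReal.toReal_ofReal']
  grind

lemma hasDerivAt_max_zero_min_one {s : ℝ} (h0 : s ≠ 0) (h1 : s ≠ 1) :
    HasDerivAt (fun s : ℝ => max 0 (min 1 s)) (if s ∈ Ioo 0 1 then 1 else 0) s := by
  rcases h0.lt_or_gt with hs0 | hs0
  · rw [if_neg fun h => hs0.not_gt h.1]
    refine (hasDerivAt_const s 0).congr_of_eventuallyEq ?_
    filter_upwards [Iio_mem_nhds hs0] with x hx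
    simp [(mem_Iio.1 hx).le, show x ≤ 1 by linarith [mem_Iio.1 hx]]
  rcases h1.lt_or_gt with hs1 | hs1
  · rw [if_pos ⟨hs0, hs1⟩]
    refine (hasDerivAt_id s).congr_of_eventuallyEq ?_
    filter_upwards [Ioo_mem_nhds hs0 hs1] with x hx
    simp [hx.1.le, hx.2.le]
  · rw [if_neg fun h => hs1.not_gt h.2]
    refine (hasDerivAt_const s 1).congr_of_eventuallyEq ?_
    filter_upwards [Ioi_mem_nhds hs1] with x hx
    simp [(mem_Ioi.1 hx).le]

lemma hasDerivAt_volume_Icc_inter_setOf_mul_sub_le {c t₀ : ℝ} (hc : c ≠ 0) (h0 : t₀ ≠ 0)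
    (h1 : t₀ ≠ 1) :
    HasDerivAt (fun ε : ℝ => (volume (Icc (0 : ℝ) 1 ∩ {u | c * (t₀ - u) ≤ ε})).toReal)
      (if t₀ ∈ Ioo 0 1 then |c|⁻¹ else 0) 0 := by
  have hthreshold : HasDerivAt (fun ε : ℝ => t₀ - ε / c) (-c⁻¹) 0 := by
    simpa using ((hasDerivAt_id (0 : ℝ)).div_const c).const_sub t₀
  have hclamp := (hasDerivAt_max_zero_min_one h0 h1).comp_of_eq 0 hthreshold (by simp)
  rcases hc.lt_or_gt with hc | hc
  · have hset : ∀ ε, {u | c * (t₀ - u) ≤ ε} = Iic (t₀ - ε / c) := fun ε => by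
      ext u; rw [mem_ofPred_eq, mem_Iic, ← div_le_iff_of_neg' hc]
      constructor <;> intro h <;> linarith
    simp only [hset, volume_Icc_inter_Iic_toReal]
    exact hclamp.congr_deriv (by split_ifs <;> simp [abs_of_neg hc])
  · have hset : ∀ ε, {u | c * (t₀ - u) ≤ ε} = Ici (t₀ - ε / c) := fun ε => by
      ext u; rw [mem_ofPred_eq, mem_Ici, ← le_div_iff₀' hc]
      constructor <;> intro h <;> linarith
    simp only [hset, volume_Icc_inter_Ici_toReal]
    exact (hclamp.const_sub 1).congr_deriv (by split_ifs <;> simp [abs_of_pos hc])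

lemma norm_lineMap_sub_sq_le_iff {E : Type*} [NormedAddCommGroup E] [InnerProductSpace ℝ E]
    {a b x1 x2 : E} {φ1 φ2 t₀ : ℝ}
    (ht₀ : ‖(1 - t₀) • a + t₀ • b - x1‖ ^ 2 - φ1 = ‖(1 - t₀) • a + t₀ • b - x2‖ ^ 2 - φ2)
    (u ε : ℝ) :
    ‖(1 - u) • a + u • b - x1‖ ^ 2 - (φ1 + ε) ≤ ‖(1 - u) • a + u • b - x2‖ ^ 2 - φ2 ↔
      2 * ⟪b - a, x1 - x2⟫ * (t₀ - u) ≤ ε := by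
  have hdiff (v : ℝ) : ‖(1 - v) • a + v • b - x1‖ ^ 2 - ‖(1 - v) • a + v • b - x2‖ ^ 2 =
      ‖x1‖ ^ 2 - ‖x2‖ ^ 2 - 2 * (⟪a, x1 - x2⟫ + v * ⟪b - a, x1 - x2⟫) := by
    simp only [norm_sub_sq_real, inner_add_left, inner_smul_left, inner_sub_left,
      inner_sub_right, RCLike.conj_to_real]
    ring
  constructor <;> intro h <;> linarith [hdiff u, hdiff t₀]

lemma polylineMeasure_apply_toReal {d p : ℕ} (P : Fin (p + 1) → EuclideanSpace ℝ (Fin d))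
    (ρ : Fin p → ℝ) {S : Set (EuclideanSpace ℝ (Fin d))} (hS : MeasurableSet S) :
    (polylineMeasure P ρ S).toReal = ∑ α, max (ρ α) 0 * (volume (Icc (0 : ℝ) 1 ∩
      (fun t : ℝ => (1 - t) • P α.castSucc + t • P α.succ) ⁻¹' S)).toReal := by
  simp only [polylineMeasure, Measure.finsetSum_apply, Measure.smul_apply, smul_eq_mul]
  rw [ENNReal.toReal_sum fun α _ => ENNReal.mul_ne_top ENNReal.ofReal_ne_top (measure_ne_top _ _)]
  refine Finset.sum_congr rfl fun α _ => ?_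
  rw [Measure.map_apply (by fun_prop) hS, Measure.restrict_apply (hS.preimage (by fun_prop)),
    inter_comm, ENNReal.toReal_mul, ENNReal.toReal_ofReal']

theorem derivative_of_cell_mass_in_weight_general {d p : ℕ}
    (x1 x2 : EuclideanSpace ℝ (Fin d))
    (P : Fin (p + 1) → EuclideanSpace ℝ (Fin d)) (ρ : Fin p → ℝ)
    (hH : ∀ α : Fin p, ⟪P α.succ - P α.castSucc, x1 - x2⟫ ≠ 0)
    (φ1 φ2 : ℝ) (t : Fin p → ℝ)
    (ht : ∀ α : Fin p,
      ‖((1 - t α) • P α.castSucc + t α • P α.succ) - x1‖ ^ 2 - φ1 =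
        ‖((1 - t α) • P α.castSucc + t α • P α.succ) - x2‖ ^ 2 - φ2)
    (ht01 : ∀ α : Fin p, 0 < ρ α → t α ≠ 0 ∧ t α ≠ 1) :
    HasDerivAt
      (fun ε : ℝ =>
        (polylineMeasure P ρ {y | ‖y - x1‖ ^ 2 - (φ1 + ε) ≤ ‖y - x2‖ ^ 2 - φ2}).toReal)
      (∑ α ∈ Finset.univ.filter (fun α : Fin p => 0 < ρ α ∧ 0 < t α ∧ t α < 1),
        ρ α / (2 * |⟪P α.succ - P α.castSucc, x1 - x2⟫|))
      0 := by
  have hmass : (fun ε : ℝ =>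
      (polylineMeasure P ρ {y | ‖y - x1‖ ^ 2 - (φ1 + ε) ≤ ‖y - x2‖ ^ 2 - φ2}).toReal) =
      fun ε => ∑ α, max (ρ α) 0 * (volume (Icc (0 : ℝ) 1 ∩
        {u | 2 * ⟪P α.succ - P α.castSucc, x1 - x2⟫ * (t α - u) ≤ ε})).toReal := by
    funext ε
    have hcell : MeasurableSet {y : EuclideanSpace ℝ (Fin d) |
        ‖y - x1‖ ^ 2 - (φ1 + ε) ≤ ‖y - x2‖ ^ 2 - φ2} :=
      measurableSet_le (by fun_prop) (by fun_prop)
    rw [polylineMeasure_apply_toReal P ρ hcell]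
    congr! with α
    ext u
    exact norm_lineMap_sub_sq_le_iff (ht α) u ε
  rw [hmass, Finset.sum_filter]
  refine HasDerivAt.fun_sum fun α _ => ?_
  by_cases hρα : 0 < ρ α
  · obtain ⟨h0, h1⟩ := ht01 α hρα
    refine ((hasDerivAt_volume_Icc_inter_setOf_mul_sub_le
      (mul_ne_zero two_ne_zero (hH α)) h0 h1).const_mul _).congr_deriv ?_
    rw [max_eq_left hρα.le, abs_mul, abs_two]
    simp only [hρα, true_and, mem_Ioo]
    split_ifs <;> simp [div_eq_mul_inv]
  · simpa [hρα, max_eq_right (not_lt.1 hρα)] using hasDerivAt_const (0 : ℝ) (0 : ℝ)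

theorem derivative_of_cell_mass_in_weight {d p : ℕ}
    (x1 x2 : EuclideanSpace ℝ (Fin d)) (h12 : x1 ≠ x2)
    (P : Fin (p + 1) → EuclideanSpace ℝ (Fin d)) (ρ : Fin p → ℝ)
    (hρ : ∀ α, 0 ≤ ρ α)
    (hH : ∀ α : Fin p, ⟪P α.succ - P α.castSucc, x1 - x2⟫ ≠ 0)
    (φ1 φ2 : ℝ) (t : Fin p → ℝ)
    (ht : ∀ α : Fin p,
      ‖((1 - t α) • P α.castSucc + t α • P α.succ) - x1‖ ^ 2 - φ1 =
        ‖((1 - t α) • P α.castSucc + t α • P α.succ) - x2‖ ^ 2 - φ2)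
    (ht01 : ∀ α : Fin p, 0 < ρ α → t α ≠ 0 ∧ t α ≠ 1) :
    HasDerivAt
      (fun ε : ℝ =>
        (polylineMeasure P ρ {y | ‖y - x1‖ ^ 2 - (φ1 + ε) ≤ ‖y - x2‖ ^ 2 - φ2}).toReal)
      (∑ α ∈ Finset.univ.filter (fun α : Fin p => 0 < ρ α ∧ 0 < t α ∧ t α < 1),
        ρ α / (2 * |⟪P α.succ - P α.castSucc, x1 - x2⟫|))
      0 :=
  derivative_of_cell_mass_in_weight_general x1 x2 P ρ hH φ1 φ2 t ht ht01
end
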